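/- Let K be a Galois number field with class number 1 of degree n = [K:ℚ], and let O be a Galois-invariant order of K whose conductor is a prime ideal of O_K and whose unit group equals that of O_K (U(O) = U(O_K)). If the elasticity ρ(O) is finite, then D̄(O) is finite; in particular D̄(O) ≤ n(ρ(O) − 1) + 1. -/

import Mathlib

open NumberField BigOperators
open scoped ENNReal

/-- The elasticity of a domain, as an extended nonnegative real:
`ρ(R) = sup { n/m | α₁⋯α_n = β₁⋯β_m with all factors irreducible }`. -/
noncomputable def elasticity (α : Type*) [CommMonoidWithZero α] : ℝ≥0∞ :=
  ⨆ (n : ℕ) (m : ℕ) (f : Fin n → α) (g : Fin m → α)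
    (_ : ∀ i, Irreducible (f i)) (_ : ∀ j, Irreducible (g j))
    (_ : ∏ i, f i = ∏ j, g j), (n : ℝ≥0∞) / (m : ℝ≥0∞)

/-- The generalized Davenport constant `D_O(R)` of a subset `O` of an atomic domain `R`:
the least `n` such that every product of `n` irreducibles of `R` has a nonempty
subproduct lying in `O` (and `⊤` if no such `n` exists). -/
noncomputable def DavenportSet (R : Type*) [CommMonoidWithZero R] (O : Set R) : ℕ∞ :=
  sInf ((↑) '' {n : ℕ | ∀ f : Fin n → R, (∀ i, Irreducible (f i)) →
    ∃ S : Finset (Fin n), S.Nonempty ∧ (∏ i ∈ S, f i) ∈ O})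

/-- The conductor `𝔣 = {α ∈ 𝓞 K : α • 𝓞 K ⊆ O}` of a subring `O` of the ring of
integers, as an ideal of `𝓞 K`. -/
def conductorIdeal {K : Type*} [Field K] [NumberField K] (O : Subring (𝓞 K)) :
    Ideal (𝓞 K) where
  carrier := {a : 𝓞 K | ∀ b : 𝓞 K, a * b ∈ O}
  add_mem' := by
    intro a b ha hb c
    simpa [add_mul] using O.add_mem (ha c) (hb c)
  zero_mem' := by
    intro b
    simpa using O.zero_mem
  smul_mem' := by
    intro c a ha b
    have h := ha (c * b)
    have e : c • a * b = a * (c * b) := by rw [smul_eq_mul]; ring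
    rw [e]; exact h

set_option linter.unusedSectionVars false
set_option linter.unusedVariables false
set_option maxHeartbeats 1000000

section General

variable {R : Type*} [CommMonoidWithZero R] [IsCancelMulZero R]

lemma exists_unit_prod_of_mul_eq_prod {ι : Type*} [DecidableEq ι] (p : ι → R)
    (s : Finset ι) (hs : ∀ i ∈ s, Prime (p i)) :
    ∀ a b : R, a * b = ∏ i ∈ s, p i →
      ∃ S ⊆ s, ∃ u : Rˣ, a = ↑u * ∏ i ∈ S, p i ∧ b = ↑u⁻¹ * ∏ i ∈ s \ S, p i := by
  induction s using Finset.induction with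
  | empty =>
    intro a b hab
    rw [Finset.prod_empty] at hab
    obtain ⟨u, rfl⟩ := IsUnit.of_mul_eq_one (a := a) b hab
    refine ⟨∅, le_refl _, u, by simp, ?_⟩
    have hb : (↑u⁻¹ : R) = b := Units.inv_eq_of_mul_eq_one_right hab
    simp [← hb]
  | @insert j s hj ih =>
    intro a b hab
    have hpj : Prime (p j) := hs j (Finset.mem_insert_self _ _)
    have hs' : ∀ i ∈ s, Prime (p i) := fun i hi => hs i (Finset.mem_insert_of_mem hi)
    rw [Finset.prod_insert hj] at hab
    have hdvd : p j ∣ a * b := ⟨∏ i ∈ s, p i, hab⟩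
    rcases (hpj.dvd_mul).mp hdvd with h | h
    · obtain ⟨a₁, rfl⟩ := h
      have hcanc : a₁ * b = ∏ i ∈ s, p i := by
        have := hab
        rw [mul_assoc] at this
        exact mul_left_cancel₀ hpj.ne_zero this
      obtain ⟨S, hSs, u, ha₁, hb⟩ := ih hs' a₁ b hcanc
      have hjS : j ∉ S := fun h => hj (hSs h)
      refine ⟨insert j S, Finset.insert_subset_insert _ hSs, u, ?_, ?_⟩
      · rw [Finset.prod_insert hjS, ha₁, mul_left_comm]
      · have : insert j s \ insert j S = s \ S := by
          ext i
          simp only [Finset.mem_sdiff, Finset.mem_insert, not_or]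
          constructor
          · rintro ⟨h1 | h1, h2, h3⟩
            · exact absurd h1 h2
            · exact ⟨h1, h3⟩
          · rintro ⟨h1, h2⟩
            exact ⟨Or.inr h1, fun he => hj (he ▸ h1), h2⟩
        rw [this, hb]
    · obtain ⟨b₁, rfl⟩ := h
      have hcanc : a * b₁ = ∏ i ∈ s, p i := by
        have : p j * (a * b₁) = p j * ∏ i ∈ s, p i := by rw [← hab, mul_left_comm]
        exact mul_left_cancel₀ hpj.ne_zero this
      obtain ⟨S, hSs, u, ha, hb₁⟩ := ih hs' a b₁ hcanc
      have hjS : j ∉ S := fun h => hj (hSs h)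
      refine ⟨S, hSs.trans (Finset.subset_insert _ _), u, ha, ?_⟩
      have hsd : insert j s \ S = insert j (s \ S) := Finset.insert_sdiff_of_notMem _ hjS
      rw [hsd, Finset.prod_insert (fun h => hj (Finset.mem_sdiff.mp h).1), hb₁, mul_left_comm]

lemma pigeonhole_subprod {M : Type*} [CommMonoidWithZero M] [IsCancelMulZero M] [Fintype M] {N : ℕ}
    (hN : Fintype.card M ≤ N) (g : Fin N → M) (hg : ∀ i, g i ≠ 0) :
    ∃ S : Finset (Fin N), S.Nonempty ∧ ∏ i ∈ S, g i = 1 := by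
  classical
  have hN1 : 0 < N := lt_of_lt_of_le Fintype.card_pos hN
  have : Nontrivial M := ⟨⟨g ⟨0, hN1⟩, 0, hg _⟩⟩
  set P : Fin (N + 1) → M := fun j => ∏ i ∈ Finset.univ.filter (fun i : Fin N => (i : ℕ) < (j : ℕ)), g i with hP
  have hninj : ¬ Function.Injective P := by
    intro hinj
    have := Fintype.card_le_of_injective P hinj
    simp only [Fintype.card_fin] at this
    omega
  rw [Function.not_injective_iff] at hninj
  obtain ⟨j, k, hPjk, hjk⟩ := hninj
  have key : ∀ j k : Fin (N+1), (j : ℕ) < (k : ℕ) → P j = P k →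
      ∃ S : Finset (Fin N), S.Nonempty ∧ ∏ i ∈ S, g i = 1 := by
    intro j k hlt hPeq
    set S : Finset (Fin N) := Finset.univ.filter (fun i : Fin N => (j : ℕ) ≤ (i : ℕ) ∧ (i : ℕ) < (k : ℕ)) with hS
    have hunion : Finset.univ.filter (fun i : Fin N => (i : ℕ) < (k : ℕ)) =
        Finset.univ.filter (fun i : Fin N => (i : ℕ) < (j : ℕ)) ∪ S := by
      ext i
      simp only [hS, Finset.mem_filter, Finset.mem_union, Finset.mem_univ, true_and]
      omega
    have hdisj : Disjoint (Finset.univ.filter (fun i : Fin N => (i : ℕ) < (j : ℕ))) S := by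
      rw [Finset.disjoint_filter]
      intro i _ hi
      simp only [hS, Finset.mem_filter] at *
      omega
    have hPk : P k = P j * ∏ i ∈ S, g i := by
      rw [hP]
      simp only
      rw [hunion, Finset.prod_union hdisj]
    have hPj0 : P j ≠ 0 := by
      rw [hP]
      exact Finset.prod_ne_zero_iff.mpr (fun i _ => hg i)
    have hprod : ∏ i ∈ S, g i = 1 := mul_left_cancel₀ hPj0
      (show P j * ∏ i ∈ S, g i = P j * 1 by rw [mul_one, ← hPk, hPeq])
    have hjN : (j : ℕ) < N := lt_of_lt_of_le hlt (Nat.lt_succ_iff.mp k.isLt)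
    refine ⟨S, ⟨⟨(j : ℕ), hjN⟩, ?_⟩, hprod⟩
    simp only [hS, Finset.mem_filter, Finset.mem_univ, true_and]
    omega
  rcases lt_or_gt_of_ne (fun h : (j : ℕ) = (k : ℕ) => hjk (Fin.ext h)) with h | h
  · exact key j k h hPjk
  · exact key k j h hPjk.symm

lemma exists_irreducible_list {M : Type*} [CommMonoidWithZero M] [IsCancelMulZero M] [WfDvdMonoid M]
    {a : M} (h0 : a ≠ 0) (hu : ¬ IsUnit a) :
    ∃ l : List M, l ≠ [] ∧ (∀ x ∈ l, Irreducible x) ∧ l.prod = a := by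
  obtain ⟨f, hf, u, hfu⟩ := WfDvdMonoid.exists_factors a h0
  have hfne : f ≠ 0 := by
    rintro rfl
    rw [Multiset.prod_zero, one_mul] at hfu
    exact hu (hfu ▸ Units.isUnit u)
  obtain ⟨b, hb⟩ := Multiset.exists_mem_of_ne_zero hfne
  obtain ⟨f', rfl⟩ := Multiset.exists_cons_of_mem hb
  refine ⟨(b * ↑u) :: f'.toList, by simp, ?_, ?_⟩
  · intro x hx
    rcases List.mem_cons.mp hx with rfl | hx
    · exact (Associated.irreducible ⟨u, rfl⟩ (hf b hb))
    · exact hf x (Multiset.mem_cons_of_mem (by rwa [← Multiset.mem_toList]))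
  · rw [List.prod_cons, Multiset.prod_toList]
    rw [← hfu, Multiset.prod_cons, mul_right_comm]

lemma le_elasticity_of_lists {α : Type*} [CommMonoidWithZero α] (l₁ l₂ : List α)
    (h₁ : ∀ x ∈ l₁, Irreducible x) (h₂ : ∀ x ∈ l₂, Irreducible x)
    (hp : l₁.prod = l₂.prod) :
    (l₁.length : ℝ≥0∞) / (l₂.length : ℝ≥0∞) ≤ elasticity α := by
  have h1 : ∏ i, l₁.get i = ∏ i, l₂.get i := by
    rw [← List.prod_ofFn, ← List.prod_ofFn]
    simp only [List.ofFn_get]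
    exact hp
  exact le_iSup_of_le l₁.length (le_iSup_of_le l₂.length (le_iSup_of_le l₁.get
    (le_iSup_of_le l₂.get (le_iSup_of_le (fun i => h₁ _ (l₁.get_mem i))
      (le_iSup_of_le (fun j => h₂ _ (l₂.get_mem j))
        (le_iSup (fun _ : (∏ i, l₁.get i = ∏ j, l₂.get j) =>
          ((l₁.length : ℝ≥0∞) / (l₂.length : ℝ≥0∞))) h1))))))

end General

section NF

variable {K : Type*} [Field K] [NumberField K]
variable {O : Subring (𝓞 K)}

lemma memConductorIdeal_iff {x : 𝓞 K} : x ∈ conductorIdeal O ↔ ∀ b : 𝓞 K, x * b ∈ O :=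
  Iff.rfl

lemma conductor_subset_O {x : 𝓞 K} (hx : x ∈ conductorIdeal O) : x ∈ O := by
  simpa using (memConductorIdeal_iff).mp hx 1

lemma mem_O_of_isUnit (hunits : ∀ u : (𝓞 K)ˣ, (u : 𝓞 K) ∈ O) {x : 𝓞 K}
    (hx : IsUnit x) : x ∈ O := by
  obtain ⟨u, rfl⟩ := hx; exact hunits u

lemma isUnit_lift (hunits : ∀ u : (𝓞 K)ˣ, (u : 𝓞 K) ∈ O) {x : ↥O}
    (hx : IsUnit (x : 𝓞 K)) : IsUnit x := by
  obtain ⟨u, hu⟩ := hx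
  refine IsUnit.of_mul_eq_one (a := x) ⟨(↑u⁻¹ : 𝓞 K), hunits u⁻¹⟩ ?_
  ext
  simp [← hu]

lemma irreducible_lift (hunits : ∀ u : (𝓞 K)ˣ, (u : 𝓞 K) ∈ O) {x : 𝓞 K} (hx : x ∈ O)
    (hirr : Irreducible x) : Irreducible (⟨x, hx⟩ : ↥O) := by
  constructor
  · intro h
    exact hirr.not_isUnit (h.map O.subtype)
  · intro a b hab
    have : x = (a : 𝓞 K) * (b : 𝓞 K) := by
      rw [← Subring.coe_mul, ← hab]
    rcases hirr.isUnit_or_isUnit this with h | h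
    · exact Or.inl (isUnit_lift hunits h)
    · exact Or.inr (isUnit_lift hunits h)

lemma conductor_ne_bot (hO : Module.finrank ℤ ↥O = Module.finrank ℚ K) :
    conductorIdeal O ≠ ⊥ := by
  classical
  set n := Module.finrank ℚ K with hn
  set M : Submodule ℤ (𝓞 K) := AddSubgroup.toIntSubmodule O.toAddSubgroup with hMdef
  have hrank𝓞 : Module.rank ℤ (𝓞 K) = (n : Cardinal) := by
    rw [← Module.finrank_eq_rank ℤ (𝓞 K), RingOfIntegers.rank]
  have hrankM_le : Module.rank ℤ ↥M ≤ (n : Cardinal) := by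
    rw [← hrank𝓞]; exact Submodule.rank_le M
  have hfinrankM : Module.finrank ℤ ↥M = n := hO
  have hrankM : Module.rank ℤ ↥M = (n : Cardinal) := by
    have hlt : Module.rank ℤ ↥M < Cardinal.aleph0 :=
      lt_of_le_of_lt hrankM_le (Cardinal.nat_lt_aleph0 n)
    have := Cardinal.cast_toNat_of_lt_aleph0 hlt
    rw [← this, ← hfinrankM, Module.finrank]
  have hq := rank_quotient_add_rank_of_isDomain M
  rw [hrankM, hrank𝓞] at hq
  have hqlt : Module.rank ℤ (𝓞 K ⧸ M) < Cardinal.aleph0 := by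
    have : Module.rank ℤ (𝓞 K ⧸ M) ≤ (n : Cardinal) := by
      rw [← hq]; exact self_le_add_right _ _
    exact lt_of_le_of_lt this (Cardinal.nat_lt_aleph0 n)
  have hq0 : Module.rank ℤ (𝓞 K ⧸ M) = 0 := by
    have h1 := congrArg Cardinal.toNat hq
    rw [Cardinal.toNat_add hqlt (Cardinal.nat_lt_aleph0 n)] at h1
    have h1' : Cardinal.toNat (Module.rank ℤ (𝓞 K ⧸ M)) + n = n := by simpa using h1
    have h2 : Cardinal.toNat (Module.rank ℤ (𝓞 K ⧸ M)) = 0 := by omega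
    rcases Cardinal.toNat_eq_zero.mp h2 with h | h
    · exact h
    · exact absurd hqlt (not_lt.mpr h)
  have htor : ∀ y : 𝓞 K, ∃ c : ℤ, c ≠ 0 ∧ c • y ∈ M := by
    intro y
    obtain ⟨c, hc0, hc⟩ := rank_eq_zero_iff.mp hq0 (Submodule.Quotient.mk y)
    refine ⟨c, hc0, ?_⟩
    rwa [← Submodule.Quotient.mk_smul, Submodule.Quotient.mk_eq_zero] at hc
  obtain ⟨s, hs⟩ := (Module.Finite.fg_top : (⊤ : Submodule ℤ (𝓞 K)).FG)
  choose c hc0 hc using htor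
  set d : ℤ := ∏ x ∈ s, c x with hd
  have hd0 : d ≠ 0 := Finset.prod_ne_zero_iff.mpr (fun x _ => hc0 x)
  have hsub : (s : Set (𝓞 K)) ⊆ (M.comap (LinearMap.lsmul ℤ (𝓞 K) d) : Set (𝓞 K)) := by
    intro x hx
    simp only [SetLike.mem_coe, Submodule.mem_comap, LinearMap.lsmul_apply]
    have : d = (∏ y ∈ s.erase x, c y) * c x := by
      rw [hd, ← Finset.mul_prod_erase s c hx, mul_comm]
    rw [this, mul_smul]
    exact M.smul_mem _ (hc x)
  have hall : ∀ b : 𝓞 K, d • b ∈ M := by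
    intro b
    have hb : b ∈ Submodule.span ℤ (s : Set (𝓞 K)) := by rw [hs]; exact Submodule.mem_top
    have hle := Submodule.span_le.mpr hsub
    exact (Submodule.mem_comap.mp (hle hb))
  intro hbot
  have hmem : ((d : ℤ) : 𝓞 K) ∈ conductorIdeal O := by
    intro b
    have : ((d : ℤ) : 𝓞 K) * b = d • b := by rw [zsmul_eq_mul]
    rw [this]
    exact hall b
  rw [hbot, Ideal.mem_bot] at hmem
  exact hd0 (by exact_mod_cast hmem)

variable [IsGalois ℚ K]

lemma galRestrict_inv_apply (σ : K ≃ₐ[ℚ] K) (x : 𝓞 K) :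
    galRestrict ℤ ℚ K (𝓞 K) σ⁻¹ (galRestrict ℤ ℚ K (𝓞 K) σ x) = x := by
  rw [map_inv]
  exact AlgEquiv.symm_apply_apply _ _

lemma gal_mem_iff (hGal : ∀ (σ : K ≃ₐ[ℚ] K) (x : 𝓞 K), x ∈ O → galRestrict ℤ ℚ K (𝓞 K) σ x ∈ O)
    (σ : K ≃ₐ[ℚ] K) {x : 𝓞 K} : galRestrict ℤ ℚ K (𝓞 K) σ x ∈ O ↔ x ∈ O := by
  refine ⟨fun h => ?_, hGal σ x⟩
  have := hGal σ⁻¹ _ h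
  rwa [galRestrict_inv_apply] at this

lemma gal_conductor (hGal : ∀ (σ : K ≃ₐ[ℚ] K) (x : 𝓞 K), x ∈ O → galRestrict ℤ ℚ K (𝓞 K) σ x ∈ O)
    (σ : K ≃ₐ[ℚ] K) {x : 𝓞 K} (hx : x ∈ conductorIdeal O) :
    galRestrict ℤ ℚ K (𝓞 K) σ x ∈ conductorIdeal O := by
  intro b
  have h1 : x * galRestrict ℤ ℚ K (𝓞 K) σ⁻¹ b ∈ O := hx _
  have h2 := hGal σ _ h1
  rw [map_mul] at h2
  have h3 : galRestrict ℤ ℚ K (𝓞 K) σ (galRestrict ℤ ℚ K (𝓞 K) σ⁻¹ b) = b := by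
    have := galRestrict_inv_apply (K := K) σ⁻¹ b
    simpa using this
  rwa [h3] at h2

lemma prod_gal_mem (x : 𝓞 K) :
    (∏ σ : K ≃ₐ[ℚ] K, galRestrict ℤ ℚ K (𝓞 K) σ x) ∈ O := by
  rw [prod_galRestrict_eq_norm]
  have : algebraMap ℤ (𝓞 K) = Int.castRingHom (𝓞 K) := by
    ext; simp
  rw [this]
  exact intCast_mem O _

lemma prime_gal (σ : K ≃ₐ[ℚ] K) {x : 𝓞 K} (hx : Prime x) :
    Prime (galRestrict ℤ ℚ K (𝓞 K) σ x) :=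
  (MulEquiv.prime_iff (galRestrict ℤ ℚ K (𝓞 K) σ).toMulEquiv).mpr hx

lemma lemW (hunits : ∀ u : (𝓞 K)ˣ, (u : 𝓞 K) ∈ O) {t : ℕ} {c : 𝓞 K} (hc : Prime c)
    (hc𝔭 : c ∈ conductorIdeal O) {r : Fin t → 𝓞 K} (hr : ∀ i, Prime (r i))
    (hrO : ∀ S : Finset (Fin t), S.Nonempty → (∏ i ∈ S, r i) ∉ O) :
    Irreducible (⟨c * ∏ i, r i, hc𝔭 _⟩ : ↥O) := by
  classical
  constructor
  · intro h
    have hR : IsUnit (c * ∏ i, r i) := h.map O.subtype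
    exact hc.not_unit (isUnit_of_mul_isUnit_left hR)
  · intro a b hab
    have habR : (a : 𝓞 K) * (b : 𝓞 K) = c * ∏ i, r i := by
      have := congrArg (Subtype.val) hab
      exact this.symm
    have hdvd : c ∣ (a : 𝓞 K) * (b : 𝓞 K) := ⟨∏ i, r i, habR⟩
    rcases hc.dvd_mul.mp hdvd with h | h
    · obtain ⟨a₁, ha₁⟩ := h
      have hcanc : a₁ * (b : 𝓞 K) = ∏ i ∈ Finset.univ, r i := by
        refine mul_left_cancel₀ hc.ne_zero ?_
        rw [← habR, ha₁, mul_assoc]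
      obtain ⟨S, _, u, ha₁', hb'⟩ :=
        exists_unit_prod_of_mul_eq_prod r Finset.univ (fun i _ => hr i) a₁ (b : 𝓞 K) hcanc
      by_cases hSne : (Finset.univ \ S).Nonempty
      · exfalso
        apply hrO _ hSne
        have : (∏ i ∈ Finset.univ \ S, r i) = ↑u * (b : 𝓞 K) := by
          rw [hb', ← mul_assoc]
          simp
        rw [this]
        exact O.mul_mem (mem_O_of_isUnit hunits (Units.isUnit u)) b.2
      · right
        have hemp : Finset.univ \ S = ∅ := Finset.not_nonempty_iff_eq_empty.mp hSne
        rw [hemp, Finset.prod_empty, mul_one] at hb'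
        exact isUnit_lift hunits (hb' ▸ (Units.isUnit u⁻¹))
    · obtain ⟨b₁, hb₁⟩ := h
      have hcanc : (a : 𝓞 K) * b₁ = ∏ i ∈ Finset.univ, r i := by
        refine mul_left_cancel₀ hc.ne_zero ?_
        rw [← habR, hb₁, mul_left_comm]
      obtain ⟨S, _, u, ha', hb₁'⟩ :=
        exists_unit_prod_of_mul_eq_prod r Finset.univ (fun i _ => hr i) (a : 𝓞 K) b₁ hcanc
      by_cases hSne : S.Nonempty
      · exfalso
        apply hrO _ hSne
        have : (∏ i ∈ S, r i) = ↑u⁻¹ * (a : 𝓞 K) := by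
          rw [ha', ← mul_assoc]
          simp
        rw [this]
        exact O.mul_mem (mem_O_of_isUnit hunits (Units.isUnit u⁻¹)) a.2
      · left
        have hemp : S = ∅ := Finset.not_nonempty_iff_eq_empty.mp hSne
        rw [hemp, Finset.prod_empty, mul_one] at ha'
        exact isUnit_lift hunits (ha' ▸ (Units.isUnit u))

end NF


/-- Let `K` be a Galois number field with class number 1 of degree
`n = [K:ℚ]`, and `O` a Galois-invariant order of `K` whose conductor is a prime ideal of
`𝓞 K` and whose unit group equals that of `𝓞 K`.  If the elasticity `ρ(O)` is finite,
then `D̄(O)` is finite; in particular `D̄(O) ≤ n(ρ(O) − 1) + 1`. -/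
theorem stmt_7 {K : Type*} [Field K] [NumberField K] [IsGalois ℚ K]
    (hK : NumberField.classNumber K = 1)
    (O : Subring (𝓞 K)) (hO : Module.finrank ℤ ↥O = Module.finrank ℚ K)
    (hGal : ∀ (σ : K ≃ₐ[ℚ] K) (x : 𝓞 K), x ∈ O → galRestrict ℤ ℚ K (𝓞 K) σ x ∈ O)
    (hprime : (conductorIdeal O).IsPrime)
    (hunits : ∀ u : (𝓞 K)ˣ, (u : 𝓞 K) ∈ O)
    (hρ : elasticity ↥O ≠ ⊤) :
    DavenportSet (𝓞 K) (O : Set (𝓞 K)) ≠ ⊤ ∧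
      (DavenportSet (𝓞 K) (O : Set (𝓞 K)) : ℝ≥0∞) ≤
        (Module.finrank ℚ K : ℝ≥0∞) * (elasticity ↥O - 1) + 1 := by
  classical
  set n := Module.finrank ℚ K with hn
  have hn1 : 0 < n := Module.finrank_pos
  have h𝔭bot : conductorIdeal O ≠ ⊥ := conductor_ne_bot hO
  haveI h𝔭prime : (conductorIdeal O).IsPrime := hprime
  letI : Fintype (𝓞 K ⧸ conductorIdeal O) :=
    @Fintype.ofFinite _ (Ideal.finiteQuotientOfFreeOfNeBot (conductorIdeal O) h𝔭bot)
  haveI hPID : IsPrincipalIdealRing (𝓞 K) := (NumberField.classNumber_eq_one_iff (K := K)).mp hK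
  have hIP : ∀ {x : 𝓞 K}, Irreducible x → Prime x := fun hx =>
    (UniqueFactorizationMonoid.irreducible_iff_prime).mp hx
  -- Good sequences: sequences of primes with no nonempty subproduct in O
  set Good : ℕ → Prop := fun N => ∃ q : Fin N → 𝓞 K, (∀ i, Prime (q i)) ∧
      ∀ S : Finset (Fin N), S.Nonempty → (∏ i ∈ S, q i) ∉ O with hGoodDef
  have hGood0 : Good 0 := by
    refine ⟨fun i => i.elim0, fun i => i.elim0, fun S hS => ?_⟩
    exact absurd (Finset.eq_empty_of_isEmpty S) (Finset.nonempty_iff_ne_empty.mp hS)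
  have hbound : ∀ N, Good N → N ≤ Fintype.card (𝓞 K ⧸ conductorIdeal O) := by
    intro N hN
    obtain ⟨q, hq, hqO⟩ := hN
    by_contra hlt
    push_neg at hlt
    have hcard : Fintype.card (𝓞 K ⧸ conductorIdeal O) ≤ N := le_of_lt hlt
    have hg : ∀ i, Ideal.Quotient.mk (conductorIdeal O) (q i) ≠ 0 := by
      intro i h0
      have hmem : q i ∈ conductorIdeal O := (Ideal.Quotient.eq_zero_iff_mem).mp h0
      exact hqO {i} (Finset.singleton_nonempty i)
        (by simpa using conductor_subset_O hmem)
    obtain ⟨S, hSne, hSprod⟩ :=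
      pigeonhole_subprod hcard (fun i => Ideal.Quotient.mk (conductorIdeal O) (q i)) hg
    apply hqO S hSne
    have h1 : Ideal.Quotient.mk (conductorIdeal O) (∏ i ∈ S, q i) =
        Ideal.Quotient.mk (conductorIdeal O) 1 := by
      rw [map_prod, hSprod, map_one]
    have h2 : (∏ i ∈ S, q i) - 1 ∈ conductorIdeal O := Ideal.Quotient.eq.mp h1
    have h3 : (∏ i ∈ S, q i) - 1 ∈ O := conductor_subset_O h2
    have h4 := O.add_mem h3 O.one_mem
    simpa using h4
  have hbdd : BddAbove {N | Good N} :=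
    ⟨Fintype.card (𝓞 K ⧸ conductorIdeal O), fun N hN => hbound N hN⟩
  set t := sSup {N | Good N} with ht
  have htG : Good t := Nat.sSup_mem ⟨0, hGood0⟩ hbdd
  have htmax : ¬ Good (t + 1) := by
    intro h
    have : t + 1 ≤ t := le_csSup hbdd h
    omega
  -- Davenport constant bound
  have hDav : (t+1) ∈ {m : ℕ | ∀ f : Fin m → 𝓞 K, (∀ i, Irreducible (f i)) →
      ∃ S : Finset (Fin m), S.Nonempty ∧ (∏ i ∈ S, f i) ∈ (O : Set (𝓞 K))} := by
    intro f hf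
    by_contra hno
    push_neg at hno
    exact htmax ⟨f, fun i => hIP (hf i), fun S hS => hno S hS⟩
  have hDle : DavenportSet (𝓞 K) (O : Set (𝓞 K)) ≤ ((t+1 : ℕ) : ℕ∞) :=
    sInf_le ⟨t+1, hDav, rfl⟩
  have hDne : DavenportSet (𝓞 K) (O : Set (𝓞 K)) ≠ ⊤ :=
    ne_top_of_le_ne_top (WithTop.natCast_ne_top _) hDle
  refine ⟨hDne, ?_⟩
  -- Elasticity lower bound
  obtain ⟨q, hqp, hqO⟩ := htG
  obtain ⟨π₀, hπ₀gen⟩ := (hPID.principal (conductorIdeal O)).principal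
  have hπ₀ne : π₀ ≠ 0 := by
    rintro rfl
    apply h𝔭bot
    rw [hπ₀gen]
    simp
  have hπ₀prime : Prime π₀ := by
    rw [← Ideal.span_singleton_prime hπ₀ne]
    show (Ideal.span {π₀}).IsPrime
    rw [show Ideal.span {π₀} = conductorIdeal O from hπ₀gen.symm]
    exact hprime
  have hπ₀𝔭 : π₀ ∈ conductorIdeal O := by
    rw [hπ₀gen]
    exact Submodule.mem_span_singleton_self π₀
  -- associated conjugates of π₀
  have hassoc : ∀ σ : K ≃ₐ[ℚ] K, ∃ u : (𝓞 K)ˣ, π₀ * ↑u = galRestrict ℤ ℚ K (𝓞 K) σ π₀ := by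
    intro σ
    have h1 : galRestrict ℤ ℚ K (𝓞 K) σ π₀ ∈ conductorIdeal O := gal_conductor hGal σ hπ₀𝔭
    rw [hπ₀gen] at h1
    have h2 : π₀ ∣ galRestrict ℤ ℚ K (𝓞 K) σ π₀ := by
      rwa [← Ideal.mem_span_singleton]
    exact (hπ₀prime.associated_of_dvd (prime_gal σ hπ₀prime) h2)
  -- the element w and its conjugates
  set w : 𝓞 K := π₀ * ∏ i, q i with hw
  have hw𝔭 : w ∈ conductorIdeal O := (conductorIdeal O).mul_mem_right _ hπ₀𝔭
  have hwOσ : ∀ σ : K ≃ₐ[ℚ] K, galRestrict ℤ ℚ K (𝓞 K) σ w ∈ O :=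
    fun σ => conductor_subset_O (gal_conductor hGal σ hw𝔭)
  have hWirr : ∀ σ : K ≃ₐ[ℚ] K, Irreducible (⟨galRestrict ℤ ℚ K (𝓞 K) σ w, hwOσ σ⟩ : ↥O) := by
    intro σ
    have hc𝔭 : galRestrict ℤ ℚ K (𝓞 K) σ π₀ ∈ conductorIdeal O := gal_conductor hGal σ hπ₀𝔭
    have hrO : ∀ S : Finset (Fin t), S.Nonempty →
        (∏ i ∈ S, galRestrict ℤ ℚ K (𝓞 K) σ (q i)) ∉ O := by
      intro S hS h
      rw [← map_prod] at h
      exact hqO S hS ((gal_mem_iff hGal σ).mp h)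
    have heq : (⟨galRestrict ℤ ℚ K (𝓞 K) σ w, hwOσ σ⟩ : ↥O) =
        ⟨galRestrict ℤ ℚ K (𝓞 K) σ π₀ * ∏ i, galRestrict ℤ ℚ K (𝓞 K) σ (q i), hc𝔭 _⟩ := by
      apply Subtype.ext
      show galRestrict ℤ ℚ K (𝓞 K) σ w = _
      rw [hw, map_mul, map_prod]
    rw [heq]
    exact lemW hunits (prime_gal σ hπ₀prime) hc𝔭 (fun i => prime_gal σ (hqp i)) hrO
  -- short factorization list
  set l₂ : List ↥O :=
    Finset.univ.toList.map (fun σ : K ≃ₐ[ℚ] K => (⟨galRestrict ℤ ℚ K (𝓞 K) σ w, hwOσ σ⟩ : ↥O))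
    with hl₂
  have hl₂len : l₂.length = n := by
    rw [hl₂, List.length_map, Finset.length_toList, Finset.card_univ,
      ← Nat.card_eq_fintype_card, IsGalois.card_aut_eq_finrank]
  have hl₂irr : ∀ x ∈ l₂, Irreducible x := by
    intro x hx
    rw [hl₂, List.mem_map] at hx
    obtain ⟨σ, _, rfl⟩ := hx
    exact hWirr σ
  have hl₂prod : (l₂.prod : 𝓞 K) = ∏ σ : K ≃ₐ[ℚ] K, galRestrict ℤ ℚ K (𝓞 K) σ w := by
    rw [hl₂, Finset.prod_map_toList]
    rw [show ((∏ σ : K ≃ₐ[ℚ] K, (⟨galRestrict ℤ ℚ K (𝓞 K) σ w, hwOσ σ⟩ : ↥O) : ↥O) : 𝓞 K) =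
      ∏ σ : K ≃ₐ[ℚ] K, ((⟨galRestrict ℤ ℚ K (𝓞 K) σ w, hwOσ σ⟩ : ↥O) : 𝓞 K)
      from SubmonoidClass.coe_finset_prod _ _]
  -- Noetherian / atomic structure on O
  haveI hNoethO : IsNoetherianRing ↥O := by
    haveI h1 : IsNoetherian ℤ ↥(AddSubgroup.toIntSubmodule O.toAddSubgroup) := inferInstance
    haveI h2 : IsNoetherian ℤ ↥O := h1
    exact isNoetherianRing_iff.mpr (isNoetherian_of_tower ℤ h2)
  haveI : WfDvdMonoid ↥O := IsNoetherianRing.wfDvdMonoid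
  -- the blocks B i
  have hBO : ∀ i : Fin t, (∏ σ : K ≃ₐ[ℚ] K, galRestrict ℤ ℚ K (𝓞 K) σ (q i)) ∈ O :=
    fun i => prod_gal_mem _
  set bB : Fin t → ↥O := fun i => ⟨∏ σ : K ≃ₐ[ℚ] K, galRestrict ℤ ℚ K (𝓞 K) σ (q i), hBO i⟩
    with hbB
  have hB0 : ∀ i, bB i ≠ 0 := by
    intro i h
    have hv : (∏ σ : K ≃ₐ[ℚ] K, galRestrict ℤ ℚ K (𝓞 K) σ (q i)) = 0 := congrArg Subtype.val h
    rw [Finset.prod_eq_zero_iff] at hv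
    obtain ⟨σ, _, h0⟩ := hv
    exact (prime_gal σ (hqp i)).ne_zero h0
  have hBnu : ∀ i, ¬ IsUnit (bB i) := by
    intro i h
    have hR : IsUnit (∏ σ : K ≃ₐ[ℚ] K, galRestrict ℤ ℚ K (𝓞 K) σ (q i)) := h.map O.subtype
    have hdvd : galRestrict ℤ ℚ K (𝓞 K) 1 (q i) ∣
        ∏ σ : K ≃ₐ[ℚ] K, galRestrict ℤ ℚ K (𝓞 K) σ (q i) :=
      Finset.dvd_prod_of_mem _ (Finset.mem_univ 1)
    exact (prime_gal 1 (hqp i)).not_unit (isUnit_of_dvd_unit hdvd hR)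
  have hfact : ∀ i : Fin t, ∃ l : List ↥O, l ≠ [] ∧ (∀ x ∈ l, Irreducible x) ∧ l.prod = bB i :=
    fun i => exists_irreducible_list (hB0 i) (hBnu i)
  choose L hLne hLirr hLprod using hfact
  -- conjugates of π₀ in O
  have hP₀O : ∀ σ : K ≃ₐ[ℚ] K, galRestrict ℤ ℚ K (𝓞 K) σ π₀ ∈ O :=
    fun σ => conductor_subset_O (gal_conductor hGal σ hπ₀𝔭)
  have hP₀irr : ∀ σ : K ≃ₐ[ℚ] K,
      Irreducible (⟨galRestrict ℤ ℚ K (𝓞 K) σ π₀, hP₀O σ⟩ : ↥O) :=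
    fun σ => irreducible_lift hunits _ ((prime_gal σ hπ₀prime).irreducible)
  -- long factorization list
  set l₁ : List ↥O :=
    (Finset.univ.toList.map (fun σ : K ≃ₐ[ℚ] K =>
      (⟨galRestrict ℤ ℚ K (𝓞 K) σ π₀, hP₀O σ⟩ : ↥O))) ++ (List.ofFn L).flatten with hl₁
  have hl₁irr : ∀ x ∈ l₁, Irreducible x := by
    intro x hx
    rw [hl₁, List.mem_append] at hx
    rcases hx with hx | hx
    · rw [List.mem_map] at hx
      obtain ⟨σ, _, rfl⟩ := hx
      exact hP₀irr σ
    · rw [List.mem_flatten] at hx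
      obtain ⟨lsub, hlsub, hxl⟩ := hx
      rw [List.mem_ofFn] at hlsub
      obtain ⟨i, rfl⟩ := hlsub
      exact hLirr i x hxl
  have hl₁prod : (l₁.prod : 𝓞 K) =
      (∏ σ : K ≃ₐ[ℚ] K, galRestrict ℤ ℚ K (𝓞 K) σ π₀) *
        ∏ i : Fin t, ∏ σ : K ≃ₐ[ℚ] K, galRestrict ℤ ℚ K (𝓞 K) σ (q i) := by
    rw [hl₁, List.prod_append, List.prod_flatten, List.map_ofFn]
    have h1 : (List.ofFn (List.prod ∘ L)).prod = ∏ i : Fin t, (L i).prod := by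
      rw [List.prod_ofFn]; rfl
    rw [h1, Finset.prod_map_toList]
    have h2 : ∀ i : Fin t, (L i).prod = bB i := hLprod
    rw [show (∏ i : Fin t, (L i).prod) = ∏ i : Fin t, bB i from Finset.prod_congr rfl
      (fun i _ => h2 i)]
    push_cast [SubmonoidClass.coe_finset_prod]
    rfl
  -- products agree
  have hprodeq : l₁.prod = l₂.prod := by
    apply Subtype.ext
    rw [hl₁prod, hl₂prod]
    rw [Finset.prod_comm]
    rw [← Finset.prod_mul_distrib]
    refine Finset.prod_congr rfl (fun σ _ => ?_)
    rw [hw, map_mul, map_prod]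
  -- lengths
  have hl₁len : n + t ≤ l₁.length := by
    rw [hl₁, List.length_append, List.length_map, Finset.length_toList, Finset.card_univ,
      ← Nat.card_eq_fintype_card, IsGalois.card_aut_eq_finrank]
    have h1 : (List.ofFn L).flatten.length = ∑ i : Fin t, (L i).length := by
      rw [List.length_flatten, List.map_ofFn, List.sum_ofFn]
      rfl
    have h2 : t ≤ ∑ i : Fin t, (L i).length := by
      calc t = ∑ _i : Fin t, 1 := by simp
      _ ≤ ∑ i : Fin t, (L i).length :=
        Finset.sum_le_sum (fun i _ => List.length_pos_iff.mpr (hLne i))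
    omega
  -- elasticity bound
  have hel : ((n + t : ℕ) : ℝ≥0∞) / ((n : ℕ) : ℝ≥0∞) ≤ elasticity ↥O := by
    have h1 := le_elasticity_of_lists l₁ l₂ hl₁irr hl₂irr hprodeq
    rw [hl₂len] at h1
    refine le_trans ?_ h1
    apply ENNReal.div_le_div_right
    exact_mod_cast hl₁len
  have hne0 : ((n : ℝ≥0∞)) ≠ 0 := by
    simpa using hn1.ne'
  have hnetop : ((n : ℝ≥0∞)) ≠ ⊤ := ENNReal.natCast_ne_top n
  have hsplit : ((n + t : ℕ) : ℝ≥0∞) / (n : ℝ≥0∞) = 1 + (t : ℝ≥0∞) / (n : ℝ≥0∞) := by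
    rw [Nat.cast_add, ENNReal.add_div, ENNReal.div_self hne0 hnetop]
  have h2 : (t : ℝ≥0∞) / (n : ℝ≥0∞) ≤ elasticity ↥O - 1 := by
    apply ENNReal.le_sub_of_add_le_left (by simp : (1:ℝ≥0∞) ≠ ⊤)
    rw [← hsplit]
    exact hel
  have h3 : (t : ℝ≥0∞) ≤ (n : ℝ≥0∞) * (elasticity ↥O - 1) := by
    have h4 := mul_le_mul_right h2 ((n : ℝ≥0∞))
    rwa [mul_comm (n : ℝ≥0∞) ((t : ℝ≥0∞) / (n : ℝ≥0∞)),
      ENNReal.div_mul_cancel hne0 hnetop] at h4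
  -- final cast
  have hcast : (DavenportSet (𝓞 K) (O : Set (𝓞 K)) : ℝ≥0∞) ≤ ((t : ℝ≥0∞) + 1) := by
    have h5 : (((t+1 : ℕ) : ℕ∞) : ℝ≥0∞) = (t : ℝ≥0∞) + 1 := by push_cast; ring
    rw [← h5]
    exact_mod_cast hDle
  exact le_trans hcast (add_le_add_left h3 1)
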